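/- For every topological space X, the cellularity of X equals the cellularity of its semiregularization X_sr. -/

import Mathlib

open Topology

/-- The cellularity of a topological space: the supremum of the cardinalities of
families of pairwise disjoint nonempty open sets, plus ℵ₀. -/
noncomputable def cellularity (X : Type u) (t : TopologicalSpace X) : Cardinal.{u} :=
  (⨆ 𝒰 : {𝒰 : Set (Set X) //
      (∀ U ∈ 𝒰, IsOpen[t] U ∧ U.Nonempty) ∧ 𝒰.PairwiseDisjoint id},
    Cardinal.mk 𝒰.1) + Cardinal.aleph0

/-- The semiregularization topology: generated by the regular open sets. -/
def srTop (X : Type u) [TopologicalSpace X] : TopologicalSpace X :=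
  TopologicalSpace.generateFrom {U : Set X | interior (closure U) = U}

/-!
Every `srTop`-open set is open, so a cellular family of `X_sr` is one of `X`. Conversely,
`U ↦ int (cl U)` sends a cellular family of `X` injectively to a cellular family of regular
open sets: disjoint open sets have disjoint closure-interiors, and `U ⊆ int (cl U)`.
-/

open Cardinal

universe u

variable {X : Type u}

def IsCellularFamily (t : TopologicalSpace X) (𝒰 : Set (Set X)) : Prop :=
  (∀ U ∈ 𝒰, IsOpen[t] U ∧ U.Nonempty) ∧ 𝒰.PairwiseDisjoint id

theorem cellularity_le_of_forall_exists {t₁ t₂ : TopologicalSpace X}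
    (h : ∀ 𝒰, IsCellularFamily t₁ 𝒰 → ∃ 𝒱, IsCellularFamily t₂ 𝒱 ∧ #𝒰 ≤ #𝒱) :
    cellularity X t₁ ≤ cellularity X t₂ := by
  refine add_le_add_left (ciSup_le' fun 𝒰 => ?_) _
  obtain ⟨𝒱, h𝒱, hle⟩ := h 𝒰.1 𝒰.2
  exact hle.trans (le_ciSup (f := fun 𝒱 : {𝒱 // IsCellularFamily t₂ 𝒱} => #𝒱.1)
    bddAbove_of_small ⟨𝒱, h𝒱⟩)

theorem cellularity_antitone : Antitone (cellularity X) := fun _ _ h =>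
  cellularity_le_of_forall_exists fun 𝒰 h𝒰 =>
    ⟨𝒰, ⟨fun U hU => ⟨h _ (h𝒰.1 U hU).1, (h𝒰.1 U hU).2⟩, h𝒰.2⟩, le_rfl⟩

section Semiregularization

variable [t : TopologicalSpace X]

theorem le_srTop : t ≤ srTop X :=
  le_generateFrom fun _ hU => hU ▸ isOpen_interior

theorem isOpen_srTop_interior_closure (s : Set X) : IsOpen[srTop X] (interior (closure s)) :=
  TopologicalSpace.isOpen_generateFrom_of_mem interior_closure_idem

theorem Disjoint.interior_closure {U V : Set X} (hd : Disjoint U V) (hV : IsOpen V) :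
    Disjoint (interior (closure U)) (interior (closure V)) :=
  (((hd.closure_left hV).mono_left interior_subset).closure_right isOpen_interior).mono_right
    interior_subset

variable {𝒰 : Set (Set X)}

theorem IsCellularFamily.injOn_interior_closure (h : IsCellularFamily t 𝒰) :
    Set.InjOn (fun U => interior (closure U)) 𝒰 := by
  intro U hU V hV (hUV : interior (closure U) = interior (closure V))
  by_contra hne
  have hd : Disjoint (interior (closure U)) (interior (closure V)) :=
    (h.2 hU hV hne).interior_closure (h.1 V hV).1
  rw [hUV, disjoint_self, Set.bot_eq_empty] at hd
  exact ((h.1 V hV).2.mono (h.1 V hV).1.subset_interior_closure).ne_empty hd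

theorem IsCellularFamily.image_interior_closure (h : IsCellularFamily t 𝒰) :
    IsCellularFamily (srTop X) ((fun U => interior (closure U)) '' 𝒰) := by
  refine ⟨?_, ?_⟩
  · rintro _ ⟨U, hU, rfl⟩
    exact ⟨isOpen_srTop_interior_closure U,
      (h.1 U hU).2.mono (h.1 U hU).1.subset_interior_closure⟩
  · rintro _ ⟨U, hU, rfl⟩ _ ⟨V, hV, rfl⟩ hne
    exact (h.2 hU hV fun hUV => hne (hUV ▸ rfl)).interior_closure (h.1 V hV).1

end Semiregularization

/-- For every topological space X, c(X) = c(X_sr). -/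
theorem stmt_9 {X : Type u} [t : TopologicalSpace X] :
    cellularity X t = cellularity X (srTop X) := by
  refine le_antisymm (cellularity_le_of_forall_exists fun 𝒰 h𝒰 => ?_)
    (cellularity_antitone le_srTop)
  exact ⟨_, h𝒰.image_interior_closure, (mk_image_eq_of_injOn _ _ h𝒰.injOn_interior_closure).ge⟩
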